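/- arXiv:2605.26477 — 5 statements merged into one kernel-verified Lean document; each statement's English description precedes it below -/
import Mathlib

section
/- Let K ≥ 1, let y ∈ [0,1]^K, and let α ∈ ℝ^K satisfy α_k ≥ 1 for all k. Define f₁(α) = Σ_{j=1}^K (y_j − p̂_j(α))². Then for every index i, the partial derivative satisfies |∂f₁/∂α_i| ≤ 2K / S(α) ≤ 2. -/
/-!
With `S = Σ α_k`, one has `∂p̂_j/∂α_i = (δ_ij S - α_j) / S²` and
`∂f₁/∂α_i = -2 Σ_j (y_j - p̂_j) ∂p̂_j/∂α_i`. Since `y_j` and `p̂_j` both lie in `[0, 1]`, and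
`δ_ij S` and `α_j` both lie in `[0, S]`, each summand is at most `2 / S` in absolute value.
Finally `α_k ≥ 1` gives `K ≤ S`.
-/

open Finset Function

variable {ι : Type*} [Fintype ι]

noncomputable def expectedProb (α : ι → ℝ) (j : ι) : ℝ := α j / ∑ k, α k

noncomputable def predictiveError (y α : ι → ℝ) : ℝ := ∑ j, (y j - expectedProb α j) ^ 2

/-- `∂p̂_j/∂α_i`. -/
noncomputable def expectedProbDeriv [DecidableEq ι] (α : ι → ℝ) (i j : ι) : ℝ :=
  ((if j = i then ∑ k, α k else 0) - α j) / (∑ k, α k) ^ 2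

theorem expectedProb_mem_Icc {α : ι → ℝ} (hα : ∀ k, 0 ≤ α k) (j : ι) :
    expectedProb α j ∈ Set.Icc 0 1 := by
  have hαj : α j ≤ ∑ k, α k := single_le_sum (fun k _ => hα k) (mem_univ j)
  exact ⟨div_nonneg (hα j) ((hα j).trans hαj), div_le_one_of_le₀ hαj ((hα j).trans hαj)⟩

variable [DecidableEq ι]

theorem hasDerivAt_expectedProb_update {α : ι → ℝ} (hS : ∑ k, α k ≠ 0) (i j : ι) :
    HasDerivAt (fun t => expectedProb (update α i t) j) (expectedProbDeriv α i j) (α i) := by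
  have hcoord := hasDerivAt_pi.1 (hasDerivAt_update α i (α i))
  have hsum : HasDerivAt (fun t => ∑ k, update α i t k) 1 (α i) := by
    simpa using HasDerivAt.fun_sum (u := univ) fun k _ => hcoord k
  refine ((hcoord j).div hsum (by simpa using hS)).congr_deriv ?_
  rcases eq_or_ne j i with rfl | hji <;> simp [expectedProbDeriv, *]

theorem abs_expectedProbDeriv_le {α : ι → ℝ} (hα : ∀ k, 0 ≤ α k) (hS : 0 < ∑ k, α k)
    (i j : ι) : |expectedProbDeriv α i j| ≤ 1 / ∑ k, α k := by
  unfold expectedProbDeriv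
  set S := ∑ k, α k
  have hnum : |(if j = i then S else 0) - α j| ≤ S := by
    refine abs_sub_le_of_nonneg_of_le (by split_ifs <;> simp [hS.le]) ?_ (hα j)
      (single_le_sum (fun k _ => hα k) (mem_univ j))
    split_ifs <;> simp [hS.le]
  calc _ = |(if j = i then S else 0) - α j| / S ^ 2 := by
        rw [abs_div, abs_of_pos (pow_pos hS 2)]
    _ ≤ S / S ^ 2 := by gcongr
    _ = 1 / S := by field_simp

noncomputable def predictiveErrorDeriv (y α : ι → ℝ) (i : ι) : ℝ :=
  ∑ j, 2 * (y j - expectedProb α j) * -expectedProbDeriv α i j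

theorem hasDerivAt_predictiveError_update (y : ι → ℝ) {α : ι → ℝ} (hS : ∑ k, α k ≠ 0) (i : ι) :
    HasDerivAt (fun t => predictiveError y (update α i t)) (predictiveErrorDeriv y α i) (α i) := by
  refine (HasDerivAt.fun_sum (u := univ) fun j _ =>
    ((hasDerivAt_expectedProb_update hS i j).const_sub (y j)).fun_pow 2).congr_deriv ?_
  simp [predictiveErrorDeriv]

theorem abs_predictiveErrorDeriv_le {y α : ι → ℝ} (hy : ∀ k, y k ∈ Set.Icc 0 1)
    (hα : ∀ k, 0 ≤ α k) (hS : 0 < ∑ k, α k) (i : ι) :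
    |predictiveErrorDeriv y α i| ≤ 2 * Fintype.card ι / ∑ k, α k := by
  have hterm (j : ι) :
      |2 * (y j - expectedProb α j) * -expectedProbDeriv α i j| ≤ 2 * (1 / ∑ k, α k) := by
    have hp := expectedProb_mem_Icc hα j
    rw [abs_mul, abs_mul, abs_neg, abs_two, mul_assoc]
    gcongr
    calc |y j - expectedProb α j| * |expectedProbDeriv α i j|
        ≤ 1 * (1 / ∑ k, α k) := by
          gcongr
          · exact abs_sub_le_of_nonneg_of_le (hy j).1 (hy j).2 hp.1 hp.2
          · exact abs_expectedProbDeriv_le hα hS i j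
      _ = 1 / ∑ k, α k := one_mul _
  calc _ ≤ ∑ j, |2 * (y j - expectedProb α j) * -expectedProbDeriv α i j| :=
        abs_sum_le_sum_abs _ _
    _ ≤ ∑ _j : ι, 2 * (1 / ∑ k, α k) := sum_le_sum fun j _ => hterm j
    _ = 2 * Fintype.card ι / ∑ k, α k := by
      rw [sum_const, card_univ, nsmul_eq_mul]
      ring

theorem predictive_error_gradient_bound_general (K : ℕ)
    (y : Fin K → ℝ) (hy : ∀ k, y k ∈ Set.Icc (0 : ℝ) 1)
    (α : Fin K → ℝ) (hα : ∀ k, 1 ≤ α k) (i : Fin K) :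
    ∃ d : ℝ,
      HasDerivAt
        (fun t : ℝ =>
          ∑ j, (y j - Function.update α i t j / ∑ k, Function.update α i t k) ^ 2)
        d (α i) ∧
      |d| ≤ 2 * K / ∑ k, α k ∧ 2 * K / (∑ k, α k) ≤ 2 := by
  have hα₀ (k : Fin K) : 0 ≤ α k := zero_le_one.trans (hα k)
  have hKS : (K : ℝ) ≤ ∑ k, α k := by
    simpa using card_nsmul_le_sum univ α 1 fun k _ => hα k
  have hS : 0 < ∑ k, α k := (Nat.cast_pos.2 i.pos).trans_le hKS
  refine ⟨_, hasDerivAt_predictiveError_update y hS.ne' i, ?_, ?_⟩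
  · simpa using abs_predictiveErrorDeriv_le hy hα₀ hS i
  · rw [div_le_iff₀ hS]
    linarith

/-- For `y ∈ [0,1]^K` and `α` with `α_k ≥ 1`, the predictive-error term
`f₁(α) = Σ_j (y_j − p̂_j(α))²` has partial derivatives bounded as
`|∂f₁/∂α_i| ≤ 2K / S(α) ≤ 2`. -/
theorem predictive_error_gradient_bound (K : ℕ) (hK : 1 ≤ K)
    (y : Fin K → ℝ) (hy : ∀ k, y k ∈ Set.Icc (0 : ℝ) 1)
    (α : Fin K → ℝ) (hα : ∀ k, 1 ≤ α k) (i : Fin K) :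
    ∃ d : ℝ,
      HasDerivAt
        (fun t : ℝ =>
          ∑ j, (y j - Function.update α i t j / ∑ k, Function.update α i t k) ^ 2)
        d (α i) ∧
      |d| ≤ 2 * K / ∑ k, α k ∧ 2 * K / (∑ k, α k) ≤ 2 :=
  predictive_error_gradient_bound_general K y hy α hα i
end

section
/- Let K ≥ 1 and let α ∈ ℝ^K satisfy α_k ≥ 1 for all k. Define the variance penalty f₂(α) = (1 − Σ_{j=1}^K p̂_j(α)²) / (S(α) + 1). Then for every index i, the partial derivative satisfies |∂f₂/∂α_i| ≤ 1/(K+1)² + 2/(K(K+1)). -/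
/-!
Along the `i`-th coordinate line `α_i = t` only `S = t + A` and `Σ_j α_j² = t² + B` move, where
`A`, `B` collect the other coordinates, and differentiating gives
`∂f₂/∂α_i = (1 - p̂_i) · 2/(S(S+1)) - (1 - Σ_j p̂_j²) · (1/(S+1)² + 2/(S(S+1)))`.
Both `1 - p̂_i` and `1 - Σ_j p̂_j²` lie in `[0, 1]`, so the derivative is a difference of two
numbers in `[0, 1/(S+1)² + 2/(S(S+1))]`; this bound decreases in `S`, and `S ≥ K`.
-/

open Finset Function

theorem sum_apply_update {ι β M : Type*} [Fintype ι] [DecidableEq ι] [AddCommMonoid M]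
    (g : β → M) (α : ι → β) (i : ι) (t : β) :
    ∑ j, g (update α i t j) = g t + ∑ j ∈ univ \ {i}, g (α j) := by
  simp_rw [apply_update (fun _ ↦ g)]
  exact sum_update_of_mem (mem_univ i) _ _

theorem hasDerivAt_variancePenalty_line {A B t : ℝ} (hs : 0 < t + A) :
    HasDerivAt (fun x ↦ (1 - (x ^ 2 + B) / (x + A) ^ 2) / (x + A + 1))
      ((1 - t / (t + A)) * (2 / ((t + A) * (t + A + 1)))
        - (1 - (t ^ 2 + B) / (t + A) ^ 2)
          * (1 / (t + A + 1) ^ 2 + 2 / ((t + A) * (t + A + 1)))) t := by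
  have hs₀ : t + A ≠ 0 := hs.ne'
  have hs₁ : t + A + 1 ≠ 0 := (add_pos hs one_pos).ne'
  have hS : HasDerivAt (fun x ↦ x + A) 1 t := (hasDerivAt_id t).add_const A
  have hQ : HasDerivAt (fun x ↦ x ^ 2 + B) (2 * t) t := by
    simpa using (hasDerivAt_pow 2 t).add_const B
  refine (((hQ.fun_div (hS.fun_pow 2) (pow_ne_zero 2 hs₀)).const_sub 1).fun_div
    (hS.add_const 1) hs₁).congr_deriv ?_
  field_simp
  ring

theorem abs_variancePenalty_deriv_le {K s p q : ℝ} (hK : 0 < K) (hKs : K ≤ s)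
    (hp₀ : 0 ≤ p) (hp₁ : p ≤ 1) (hq₀ : 0 ≤ q) (hq₁ : q ≤ 1) :
    |(1 - p) * (2 / (s * (s + 1))) - (1 - q) * (1 / (s + 1) ^ 2 + 2 / (s * (s + 1)))|
      ≤ 1 / (K + 1) ^ 2 + 2 / (K * (K + 1)) := by
  have hs : 0 < s := hK.trans_le hKs
  have ha : 0 ≤ 1 / (s + 1) ^ 2 := by positivity
  have hb : 0 ≤ 2 / (s * (s + 1)) := by positivity
  calc _ ≤ 1 / (s + 1) ^ 2 + 2 / (s * (s + 1)) :=
        abs_sub_le_of_nonneg_of_le (mul_nonneg (by linarith) hb)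
          ((mul_le_of_le_one_left hb (by linarith)).trans (le_add_of_nonneg_left ha))
          (mul_nonneg (by linarith) (add_nonneg ha hb))
          (mul_le_of_le_one_left (add_nonneg ha hb) (by linarith))
    _ ≤ 1 / (K + 1) ^ 2 + 2 / (K * (K + 1)) := by gcongr

theorem variance_penalty_gradient_bound_general (K : ℕ)
    (α : Fin K → ℝ) (hα : ∀ k, 1 ≤ α k) (i : Fin K) :
    ∃ d : ℝ,
      HasDerivAt
        (fun t : ℝ =>
          (1 - ∑ j, (Function.update α i t j / ∑ k, Function.update α i t k) ^ 2)
            / ((∑ k, Function.update α i t k) + 1))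
        d (α i) ∧
      |d| ≤ 1 / ((K : ℝ) + 1) ^ 2 + 2 / ((K : ℝ) * ((K : ℝ) + 1)) := by
  set A := ∑ j ∈ univ \ {i}, α j
  set B := ∑ j ∈ univ \ {i}, α j ^ 2
  have hline : (fun t : ℝ =>
      (1 - ∑ j, (update α i t j / ∑ k, update α i t k) ^ 2) / ((∑ k, update α i t k) + 1))
      = fun t ↦ (1 - (t ^ 2 + B) / (t + A) ^ 2) / (t + A + 1) := by
    funext t
    simp only [div_pow, ← sum_div, sum_update_of_mem (mem_univ i), sum_apply_update (· ^ 2)]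
    rfl
  have hS : ∑ k, α k = α i + A := by simp [A]
  have hQ : ∑ k, α k ^ 2 = α i ^ 2 + B := by simp [B]
  have hα₀ : ∀ k, 0 ≤ α k := fun k ↦ zero_le_one.trans (hα k)
  have hK : (0 : ℝ) < K := Nat.cast_pos.mpr i.pos
  have hKS : (K : ℝ) ≤ ∑ k, α k := by simpa using card_nsmul_le_sum univ α 1 fun k _ ↦ hα k
  have hS₀ : 0 < ∑ k, α k := hK.trans_le hKS
  rw [hline]
  refine ⟨_, hasDerivAt_variancePenalty_line (hS ▸ hS₀), ?_⟩
  rw [← hS, ← hQ]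
  refine abs_variancePenalty_deriv_le hK hKS (div_nonneg (hα₀ i) hS₀.le) ?_ (by positivity) ?_
  · exact div_le_one_of_le₀ (single_le_sum (fun k _ ↦ hα₀ k) (mem_univ i)) hS₀.le
  · exact div_le_one_of_le₀ (sum_sq_le_sq_sum_of_nonneg fun k _ ↦ hα₀ k) (by positivity)

/-- For `α` with `α_k ≥ 1`, the variance-penalty term
`f₂(α) = (1 − Σ_j p̂_j(α)²) / (S(α) + 1)` has partial derivatives bounded as
`|∂f₂/∂α_i| ≤ 1/(K+1)² + 2/(K(K+1))`. -/
theorem variance_penalty_gradient_bound (K : ℕ) (hK : 1 ≤ K)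
    (α : Fin K → ℝ) (hα : ∀ k, 1 ≤ α k) (i : Fin K) :
    ∃ d : ℝ,
      HasDerivAt
        (fun t : ℝ =>
          (1 - ∑ j, (Function.update α i t j / ∑ k, Function.update α i t k) ^ 2)
            / ((∑ k, Function.update α i t k) + 1))
        d (α i) ∧
      |d| ≤ 1 / ((K : ℝ) + 1) ^ 2 + 2 / ((K : ℝ) * ((K : ℝ) + 1)) :=
  variance_penalty_gradient_bound_general K α hα i
end

section
/- Let K ≥ 1, let λ ∈ ℝ^K be a fixed vector, and let α ∈ ℝ^K have strictly positive entries. Define the effective KL objective D̃(α) = log Γ(S(α)) − Σ_{k=1}^K log Γ(α_k) + Σ_{k=1}^K (α_k − λ_k)(ψ(α_k) − ψ(S(α))). Then for every index i, the partial derivative of D̃ with respect to α_i equals (α_i − λ_i)·ψ′(α_i) − (S(α) − ‖λ‖₁)·ψ′(S(α)). -/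
/-!
`Γ` is the restriction of the holomorphic complex `Γ`, hence smooth on `(0, ∞)`, so `ψ` is
differentiable there with derivative `ψ′`. Moving `α_i` alone moves `S(α)` at unit speed, and by the
product rule the derivative of `D̃` is
`ψ(S) − ψ(α_i) + (ψ(α_i) − ψ(S)) + (α_i − λ_i) ψ′(α_i) − Σ_k (α_k − λ_k) ψ′(S)`:
the digamma terms cancel.
-/

/-- The digamma function `ψ`, i.e. the derivative of `x ↦ log Γ(x)`. -/
noncomputable def digamma (x : ℝ) : ℝ := deriv (fun y : ℝ => Real.log (Real.Gamma y)) x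

/-- The trigamma function `ψ′`, i.e. the derivative of the digamma function. -/
noncomputable def trigamma (x : ℝ) : ℝ := deriv digamma x

open Set Function

theorem Complex.contDiffOn_Gamma_re_pos {n : WithTop ℕ∞} :
    ContDiffOn ℂ n Gamma {s | 0 < s.re} := by
  refine DifferentiableOn.contDiffOn (fun s hs => ?_) (isOpen_lt continuous_const continuous_re)
  refine (differentiableAt_Gamma s fun m hm => ?_).differentiableWithinAt
  have : (0 : ℝ) < -m := by simpa [hm] using hs
  linarith [(m.cast_nonneg : (0 : ℝ) ≤ m)]

theorem Real.contDiffOn_Gamma_Ioi {n : WithTop ℕ∞} : ContDiffOn ℝ n Gamma (Ioi 0) := by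
  intro x hx
  have hC : ContDiffAt ℂ n Complex.Gamma x :=
    Complex.contDiffOn_Gamma_re_pos.contDiffAt
      ((isOpen_lt continuous_const Complex.continuous_re).mem_nhds (by simpa using hx))
  have hre : (fun y : ℝ => (Complex.Gamma y).re) = Gamma := by
    funext y
    rw [Complex.Gamma_ofReal, Complex.ofReal_re]
  exact (hre ▸ hC.real_of_complex).contDiffWithinAt

theorem Real.contDiffOn_log_Gamma_Ioi {n : WithTop ℕ∞} :
    ContDiffOn ℝ n (fun x => log (Gamma x)) (Ioi 0) :=
  contDiffOn_Gamma_Ioi.log fun _ hx => (Gamma_pos_of_pos hx).ne'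

theorem hasDerivAt_log_Gamma {x : ℝ} (hx : 0 < x) :
    HasDerivAt (fun y => Real.log (Real.Gamma y)) (digamma x) x :=
  ((Real.contDiffOn_log_Gamma_Ioi (n := 1)).differentiableOn one_ne_zero
    |>.differentiableAt (Ioi_mem_nhds hx)).hasDerivAt

theorem hasDerivAt_digamma {x : ℝ} (hx : 0 < x) : HasDerivAt digamma (trigamma x) x := by
  have h : ContDiffOn ℝ 1 digamma (Ioi 0) :=
    (Real.contDiffOn_log_Gamma_Ioi (n := 2)).deriv_of_isOpen isOpen_Ioi (by norm_num)
  exact ((h.differentiableOn one_ne_zero).differentiableAt (Ioi_mem_nhds hx)).hasDerivAt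

section update

variable {ι : Type*} [DecidableEq ι] (α : ι → ℝ) (i : ι)

theorem hasDerivAt_update_apply (k : ι) :
    HasDerivAt (fun t => update α i t k) ((Pi.single i 1 : ι → ℝ) k) (α i) :=
  hasDerivAt_pi.mp (hasDerivAt_update α i (α i)) k

theorem HasDerivAt.comp_update_apply {f : ℝ → ℝ} {f' : ℝ} {k : ι} (hf : HasDerivAt f f' (α k)) :
    HasDerivAt (fun t => f (update α i t k)) (f' * (Pi.single i 1 : ι → ℝ) k) (α i) :=
  HasDerivAt.comp_of_eq (α i) hf (hasDerivAt_update_apply α i k) (by rw [update_eq_self])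

variable [Fintype ι]

theorem hasDerivAt_sum_update : HasDerivAt (fun t => ∑ k, update α i t k) 1 (α i) := by
  simpa using HasDerivAt.fun_sum (u := Finset.univ) fun k _ => hasDerivAt_update_apply α i k

theorem HasDerivAt.comp_sum_update {f : ℝ → ℝ} {f' : ℝ} (hf : HasDerivAt f f' (∑ k, α k)) :
    HasDerivAt (fun t => f (∑ k, update α i t k)) f' (α i) :=
  (HasDerivAt.comp_of_eq (α i) hf (hasDerivAt_sum_update α i) (by rw [update_eq_self])).congr_deriv
    (mul_one f')

end update

theorem effective_kl_partial_deriv_general (K : ℕ) (lam α : Fin K → ℝ)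
    (hα : ∀ k, 0 < α k) (i : Fin K) :
    HasDerivAt
      (fun t : ℝ =>
        Real.log (Real.Gamma (∑ k, Function.update α i t k))
          - ∑ k, Real.log (Real.Gamma (Function.update α i t k))
          + ∑ k, (Function.update α i t k - lam k) *
              (digamma (Function.update α i t k) - digamma (∑ k', Function.update α i t k')))
      ((α i - lam i) * trigamma (α i) - ((∑ k, α k) - ∑ k, lam k) * trigamma (∑ k, α k))
      (α i) := by
  have hS : 0 < ∑ k, α k := Finset.sum_pos (fun k _ => hα k) ⟨i, Finset.mem_univ i⟩
  have hψS := (hasDerivAt_digamma hS).comp_sum_update α i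
  have hlogΓS := (hasDerivAt_log_Gamma hS).comp_sum_update α i
  have hlogΓ := HasDerivAt.fun_sum (u := Finset.univ) fun k _ =>
    (hasDerivAt_log_Gamma (hα k)).comp_update_apply α i
  have hcross := HasDerivAt.fun_sum (u := Finset.univ) fun k _ =>
    ((hasDerivAt_update_apply α i k).sub_const (lam k)).fun_mul
      (((hasDerivAt_digamma (hα k)).comp_update_apply α i).fun_sub hψS)
  refine ((hlogΓS.fun_sub hlogΓ).fun_add hcross).congr_deriv ?_
  have hδ (g : Fin K → ℝ) : ∑ k, g k * (Pi.single i 1 : Fin K → ℝ) k = g i := by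
    simp [Pi.single_apply]
  have hδ' (g : Fin K → ℝ) : ∑ k, (Pi.single i 1 : Fin K → ℝ) k * g k = g i := by
    simp [Pi.single_apply]
  simp only [update_eq_self, mul_sub, ← mul_assoc, Finset.sum_add_distrib, Finset.sum_sub_distrib,
    hδ, hδ', ← Finset.sum_mul]
  ring

/-- For the effective KL objective
`D̃(α) = log Γ(S(α)) − Σ_k log Γ(α_k) + Σ_k (α_k − λ_k)(ψ(α_k) − ψ(S(α)))`,
the partial derivative with respect to `α_i` equals
`(α_i − λ_i)·ψ′(α_i) − (S(α) − ‖λ‖₁)·ψ′(S(α))`. -/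
theorem effective_kl_partial_deriv (K : ℕ) (hK : 1 ≤ K) (lam α : Fin K → ℝ)
    (hα : ∀ k, 0 < α k) (i : Fin K) :
    HasDerivAt
      (fun t : ℝ =>
        Real.log (Real.Gamma (∑ k, Function.update α i t k))
          - ∑ k, Real.log (Real.Gamma (Function.update α i t k))
          + ∑ k, (Function.update α i t k - lam k) *
              (digamma (Function.update α i t k) - digamma (∑ k', Function.update α i t k')))
      ((α i - lam i) * trigamma (α i) - ((∑ k, α k) - ∑ k, lam k) * trigamma (∑ k, α k))
      (α i) :=
  effective_kl_partial_deriv_general K lam α hα i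
end

section
/- For every real x > 0, the trigamma function satisfies the double inequality 1/x < ψ′(x) < 1/x + 1/x². -/
/-!
Summing `ψ(y + 1) = ψ(y) + 1/y` gives `ψ(x + N) - ψ(1 + N) = ψ(x) - ψ(1) - ∑_{n<N} (1/(n+1) - 1/(n+x))`,
and convexity of `log Γ` squeezes `log (y - 1) ≤ ψ(y) ≤ log y`, so the left side tends to `0`.
Differentiating the resulting series term by term gives `ψ'(x) = ∑ 1/(n+x)^2`. Both bounds follow by
comparing this termwise with the telescoping series `∑ (1/(n+x) - 1/(n+x+1)) = 1/x`, using
`1/(t+1)^2 < 1/t - 1/(t+1) < 1/t^2`; for the upper bound the first term `1/x^2` is split off.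
-/

open Real Filter Topology Set Finset

lemma summable_one_div_nat_add_sq {a : ℝ} (ha : 0 < a) :
    Summable fun n : ℕ => 1 / ((n : ℝ) + a) ^ 2 :=
  ((summable_one_div_nat_add_rpow a 2).mpr one_lt_two).congr fun n => by
    rw [abs_of_pos (by positivity), rpow_two]

lemma hasSum_sub_succ_of_antitone {f : ℕ → ℝ} (hf : Antitone f) {l : ℝ}
    (hl : Tendsto f atTop (𝓝 l)) : HasSum (fun n => f n - f (n + 1)) (f 0 - l) := by
  rw [hasSum_iff_tendsto_nat_of_nonneg fun n => sub_nonneg.2 (hf n.le_succ)]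
  simp_rw [sum_range_sub']
  exact tendsto_const_nhds.sub hl

lemma hasSum_one_div_nat_add_sub {x : ℝ} (hx : 0 < x) :
    HasSum (fun n : ℕ => 1 / ((n : ℝ) + x) - 1 / ((n : ℝ) + x + 1)) (1 / x) := by
  have hanti : Antitone fun n : ℕ => 1 / ((n : ℝ) + x) := fun m n hmn => by
    dsimp only
    gcongr
  have hlim : Tendsto (fun n : ℕ => 1 / ((n : ℝ) + x)) atTop (𝓝 0) :=
    tendsto_const_nhds.div_atTop (tendsto_atTop_add_const_right _ _ tendsto_natCast_atTop_atTop)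
  simpa [add_right_comm _ (1 : ℝ)] using hasSum_sub_succ_of_antitone hanti hlim

lemma one_div_sub_one_div_add_one_eq {t : ℝ} (ht : 0 < t) :
    1 / t - 1 / (t + 1) = 1 / (t * (t + 1)) := by
  field_simp
  ring

lemma one_div_sub_one_div_add_one_lt {t : ℝ} (ht : 0 < t) : 1 / t - 1 / (t + 1) < 1 / t ^ 2 := by
  rw [one_div_sub_one_div_add_one_eq ht]
  gcongr
  nlinarith

lemma one_div_add_one_sq_lt {t : ℝ} (ht : 0 < t) : 1 / (t + 1) ^ 2 < 1 / t - 1 / (t + 1) := by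
  rw [one_div_sub_one_div_add_one_eq ht]
  gcongr
  nlinarith

lemma differentiableAt_log_Gamma {x : ℝ} (hx : 0 < x) :
    DifferentiableAt ℝ (fun y => log (Gamma y)) x := by
  have hx' : ∀ m : ℕ, x ≠ -m := fun m => by
    have := m.cast_nonneg (α := ℝ)
    linarith
  exact (differentiableAt_Gamma hx').log (Gamma_ne_zero hx')

lemma log_Gamma_add_one {x : ℝ} (hx : 0 < x) : log (Gamma (x + 1)) = log (Gamma x) + log x := by
  rw [Gamma_add_one hx.ne', log_mul hx.ne' (Gamma_pos_of_pos hx).ne', add_comm]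

lemma digamma_add_one {x : ℝ} (hx : 0 < x) : digamma (x + 1) = digamma x + 1 / x := by
  unfold digamma
  rw [← deriv_comp_add_const, one_div, ← deriv_log,
    ← deriv_add (differentiableAt_log_Gamma hx) (differentiableAt_log hx.ne')]
  refine EventuallyEq.deriv_eq ?_
  filter_upwards [eventually_gt_nhds hx] with y hy
  exact log_Gamma_add_one hy

lemma digamma_add_nat {x : ℝ} (hx : 0 < x) (N : ℕ) :
    digamma (x + N) = digamma x + ∑ k ∈ range N, 1 / ((k : ℝ) + x) := by
  induction N with
  | zero => simp
  | succ n ih =>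
    rw [Nat.cast_succ, ← add_assoc, digamma_add_one (by positivity), ih, sum_range_succ, add_assoc,
      add_comm x]

lemma slope_log_Gamma {x : ℝ} (hx : 0 < x) : slope (log ∘ Gamma) x (x + 1) = log x := by
  rw [slope_def_field, add_sub_cancel_left, div_one, Function.comp_apply, Function.comp_apply,
    log_Gamma_add_one hx, add_sub_cancel_left]

lemma log_sub_one_le_digamma {x : ℝ} (hx : 1 < x) : log (x - 1) ≤ digamma x := by
  have h := convexOn_log_Gamma.slope_le_deriv (x := x - 1) (y := x) (by simp; linarith)
    (by simp; linarith) (by linarith) (differentiableAt_log_Gamma (by linarith))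
  rwa [← slope_log_Gamma (by linarith : 0 < x - 1), sub_add_cancel]

lemma digamma_le_log {x : ℝ} (hx : 1 < x) : digamma x ≤ log x := by
  have h := convexOn_log_Gamma.deriv_le_slope (x := x) (y := x + 1) (by simp; linarith)
    (by simp; linarith) (by linarith) (differentiableAt_log_Gamma (by linarith))
  rwa [slope_log_Gamma (by linarith)] at h

lemma digamma_sub_digamma_le {x y : ℝ} (hx : 1 < x) (hy : 1 < y) :
    digamma x - digamma y ≤ (x - y + 1) / (y - 1) := by
  have hy1 : 0 < y - 1 := by linarith
  have hlog : log x - log (y - 1) ≤ x / (y - 1) - 1 := by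
    rw [← log_div (by positivity) hy1.ne']
    exact log_le_sub_one_of_pos (by positivity)
  have hrhs : x / (y - 1) - 1 = (x - y + 1) / (y - 1) := by
    field_simp
    ring
  linarith [digamma_le_log hx, log_sub_one_le_digamma hy]

lemma tendsto_digamma_add_nat_sub {x y : ℝ} (hx : 0 < x) (hy : 0 < y) :
    Tendsto (fun N : ℕ => digamma (x + N) - digamma (y + N)) atTop (𝓝 0) := by
  have hdecay : ∀ a b : ℝ, Tendsto (fun N : ℕ => a / (b + N - 1)) atTop (𝓝 0) := fun a b =>
    tendsto_const_nhds.div_atTop <| tendsto_atTop_add_const_right _ _ <|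
      tendsto_atTop_add_const_left _ _ tendsto_natCast_atTop_atTop
  refine tendsto_of_tendsto_of_tendsto_of_le_of_le' (by simpa using (hdecay (y - x + 1) x).neg)
    (hdecay (x - y + 1) y) ?_ ?_
  all_goals filter_upwards [eventually_ge_atTop 1] with N hN
  all_goals have hN : (1 : ℝ) ≤ N := by exact_mod_cast hN
  · have h := digamma_sub_digamma_le (x := y + N) (y := x + N) (by linarith) (by linarith)
    rw [show y + N - (x + N) + 1 = y - x + 1 by ring] at h
    linarith
  · have h := digamma_sub_digamma_le (x := x + N) (y := y + N) (by linarith) (by linarith)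
    rwa [show x + N - (y + N) + 1 = x - y + 1 by ring] at h

lemma hasDerivAt_one_div_nat_add_one_sub (n : ℕ) {y : ℝ} (hy : 0 < y) :
    HasDerivAt (fun z : ℝ => 1 / ((n : ℝ) + 1) - 1 / ((n : ℝ) + z)) (1 / ((n : ℝ) + y) ^ 2) y := by
  have h := (((hasDerivAt_id' y).const_add (n : ℝ)).inv (by positivity)).const_sub
    (1 / ((n : ℝ) + 1))
  simp only [← one_div, neg_div, neg_neg] at h
  exact h

lemma norm_one_div_nat_add_sq_le (n : ℕ) {c y : ℝ} (hc : 0 < c) (hcy : c ≤ y) :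
    ‖1 / ((n : ℝ) + y) ^ 2‖ ≤ 1 / ((n : ℝ) + c) ^ 2 := by
  rw [norm_of_nonneg (by positivity)]
  gcongr

lemma summable_and_hasDerivAt_tsum_one_div_nat_add_one_sub {x : ℝ} (hx : 0 < x) :
    Summable (fun n : ℕ => 1 / ((n : ℝ) + 1) - 1 / ((n : ℝ) + x)) ∧
      HasDerivAt (fun z : ℝ => ∑' n : ℕ, (1 / ((n : ℝ) + 1) - 1 / ((n : ℝ) + z)))
        (∑' n : ℕ, 1 / ((n : ℝ) + x) ^ 2) x := by
  -- `Ioi c` contains both `x` and the point `1`, where every term vanishes.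
  set c := min 1 x / 2
  have hc : 0 < c := by positivity
  have hc1 : (1 : ℝ) ∈ Ioi c := show c < 1 by grind
  have hcx : x ∈ Ioi c := show c < x by grind
  have hderiv : ∀ (n : ℕ), ∀ y ∈ Ioi c, HasDerivAt
      (fun z : ℝ => 1 / ((n : ℝ) + 1) - 1 / ((n : ℝ) + z)) (1 / ((n : ℝ) + y) ^ 2) y :=
    fun n y hy => hasDerivAt_one_div_nat_add_one_sub n (hc.trans hy)
  have hbound : ∀ (n : ℕ), ∀ y ∈ Ioi c, ‖1 / ((n : ℝ) + y) ^ 2‖ ≤ 1 / ((n : ℝ) + c) ^ 2 :=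
    fun n y hy => norm_one_div_nat_add_sq_le n hc (le_of_lt hy)
  have hsummable_one : Summable fun n : ℕ => 1 / ((n : ℝ) + 1) - 1 / ((n : ℝ) + 1) := by
    simp only [sub_self, summable_zero]
  constructor
  · exact summable_of_summable_hasDerivAt_of_isPreconnected (summable_one_div_nat_add_sq hc)
      isOpen_Ioi isPreconnected_Ioi hderiv hbound hc1 hsummable_one hcx
  · exact hasDerivAt_tsum_of_isPreconnected
      (g := fun (n : ℕ) (z : ℝ) => 1 / ((n : ℝ) + 1) - 1 / ((n : ℝ) + z))
      (g' := fun (n : ℕ) (y : ℝ) => 1 / ((n : ℝ) + y) ^ 2) (summable_one_div_nat_add_sq hc)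
      isOpen_Ioi isPreconnected_Ioi hderiv hbound hc1 hsummable_one hcx

lemma hasSum_one_div_nat_add_one_sub {x : ℝ} (hx : 0 < x) :
    HasSum (fun n : ℕ => 1 / ((n : ℝ) + 1) - 1 / ((n : ℝ) + x)) (digamma x - digamma 1) := by
  rw [(summable_and_hasDerivAt_tsum_one_div_nat_add_one_sub hx).1.hasSum_iff_tendsto_nat]
  have hpartial : ∀ N : ℕ, ∑ k ∈ range N, (1 / ((k : ℝ) + 1) - 1 / ((k : ℝ) + x)) =
      digamma x - digamma 1 - (digamma (x + N) - digamma (1 + N)) := by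
    intro N
    rw [digamma_add_nat hx, digamma_add_nat one_pos, sum_sub_distrib]
    ring
  simp_rw [hpartial]
  simpa using tendsto_const_nhds.sub (tendsto_digamma_add_nat_sub hx one_pos)

lemma hasSum_trigamma {x : ℝ} (hx : 0 < x) :
    HasSum (fun n : ℕ => 1 / ((n : ℝ) + x) ^ 2) (trigamma x) := by
  have hdigamma : digamma =ᶠ[𝓝 x]
      fun z => digamma 1 + ∑' n : ℕ, (1 / ((n : ℝ) + 1) - 1 / ((n : ℝ) + z)) := by
    filter_upwards [eventually_gt_nhds hx] with y hy
    rw [(hasSum_one_div_nat_add_one_sub hy).tsum_eq, add_sub_cancel]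
  have hderiv := (summable_and_hasDerivAt_tsum_one_div_nat_add_one_sub hx).2.const_add (digamma 1)
  rw [trigamma, hdigamma.deriv_eq, hderiv.deriv]
  exact (summable_one_div_nat_add_sq hx).hasSum

lemma one_div_lt_trigamma {x : ℝ} (hx : 0 < x) : 1 / x < trigamma x := by
  have hlt : ∀ n : ℕ, 1 / ((n : ℝ) + x) - 1 / ((n : ℝ) + x + 1) < 1 / ((n : ℝ) + x) ^ 2 :=
    fun n => one_div_sub_one_div_add_one_lt (by positivity)
  exact hasSum_lt (fun n => (hlt n).le) (hlt 0) (hasSum_one_div_nat_add_sub hx) (hasSum_trigamma hx)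

lemma trigamma_lt_one_div_add_one_div_sq {x : ℝ} (hx : 0 < x) :
    trigamma x < 1 / x + 1 / x ^ 2 := by
  have htail := (hasSum_nat_add_iff' 1).mpr (hasSum_trigamma hx)
  simp only [range_one, sum_singleton, Nat.cast_add, Nat.cast_one, Nat.cast_zero, zero_add]
    at htail
  have hlt : ∀ n : ℕ, 1 / ((n : ℝ) + 1 + x) ^ 2 < 1 / ((n : ℝ) + x) - 1 / ((n : ℝ) + x + 1) :=
    fun n => by
      rw [add_right_comm]
      exact one_div_add_one_sq_lt (by positivity)
  have := hasSum_lt (f := fun n : ℕ => 1 / ((n : ℝ) + 1 + x) ^ 2) (fun n => (hlt n).le) (hlt 0)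
    htail (hasSum_one_div_nat_add_sub hx)
  linarith

/-- For every real `x > 0`, `1/x < ψ′(x) < 1/x + 1/x²`. -/
theorem trigamma_bounds (x : ℝ) (hx : 0 < x) :
    1 / x < trigamma x ∧ trigamma x < 1 / x + 1 / x ^ 2 :=
  ⟨one_div_lt_trigamma hx, trigamma_lt_one_div_add_one_div_sq hx⟩
end

section
/- Let n ≥ 1, let T ⊆ ℝⁿ be a nonempty finite set, and let φ : ℝ → ℝ be L-Lipschitz with φ(0) = 0, for some L ≥ 0. Then E_σ[ max_{t ∈ T} Σ_{i=1}^n σ_i·φ(t_i) ] ≤ L · E_σ[ max_{t ∈ T} Σ_{i=1}^n σ_i·t_i ], where σ is drawn uniformly from {−1, 1}ⁿ. -/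
/-!
Replace the coordinates `φ (t i)` by `L * t i` one at a time. Pairing each sign vector with the
one that flips coordinate `k`, the two sign patterns contribute
`sup_t (f t + φ (t k)) + sup_t (f t - φ (t k))` for some common part `f`. If `s` and `t` attain
the two suprema, then `φ (s k) - φ (t k) ≤ L * |s k - t k|`, and choosing which of `s`, `t`
to feed into which supremum shows that this pair sum does not decrease when `φ` is replaced by
`x ↦ L * x`. Finally `L ≥ 0` is pulled out of the suprema.
-/

open Finset

theorem Finset.sup'_add_sup'_sub_le_of_sub_le_abs {α : Type*} (T : Finset α) (hT : T.Nonempty)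
    (f u v : α → ℝ) (h : ∀ s ∈ T, ∀ t ∈ T, u s - u t ≤ |v s - v t|) :
    T.sup' hT (fun t => f t + u t) + T.sup' hT (fun t => f t - u t)
      ≤ T.sup' hT (fun t => f t + v t) + T.sup' hT (fun t => f t - v t) := by
  obtain ⟨s, hs, hs_max⟩ := T.exists_mem_eq_sup' hT (fun t => f t + u t)
  obtain ⟨t, ht, ht_max⟩ := T.exists_mem_eq_sup' hT (fun t => f t - u t)
  rw [hs_max, ht_max]
  rcases le_abs.mp (h s hs t ht) with hst | hst
  · have := le_sup' (fun t => f t + v t) hs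
    have := le_sup' (fun t => f t - v t) ht
    linarith
  · have := le_sup' (fun t => f t + v t) ht
    have := le_sup' (fun t => f t - v t) hs
    linarith

theorem Fintype.sum_le_sum_of_add_comp_involutive {β : Type*} [Fintype β] {e : β → β}
    (he : Function.Involutive e) (F G : β → ℝ) (h : ∀ σ, F σ + F (e σ) ≤ G σ + G (e σ)) :
    ∑ σ, F σ ≤ ∑ σ, G σ := by
  have hF : ∑ σ, F (e σ) = ∑ σ, F σ := Equiv.sum_comp he.toPerm F
  have hG : ∑ σ, G (e σ) = ∑ σ, G σ := Equiv.sum_comp he.toPerm G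
  have hsum := Finset.sum_le_sum fun σ (_ : σ ∈ univ) => h σ
  rw [sum_add_distrib, sum_add_distrib, hF, hG] at hsum
  linarith

theorem Fintype.sum_eq_sum_sub_add_of_eq_of_ne {ι : Type*} [Fintype ι] [DecidableEq ι]
    {x y : ι → ℝ} (k : ι) (h : ∀ i ≠ k, x i = y i) :
    ∑ i, x i = ∑ i, y i - y k + x k := by
  have hrest : ∑ i ∈ univ.erase k, x i = ∑ i ∈ univ.erase k, y i :=
    Finset.sum_congr rfl fun i hi => h i (ne_of_mem_erase hi)
  rw [← add_sum_erase _ x (mem_univ k), ← add_sum_erase _ y (mem_univ k), hrest]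
  ring

def boolSign (b : Bool) : ℝ := if b then 1 else -1

theorem boolSign_not (b : Bool) : boolSign (!b) = -boolSign b := by
  cases b <;> simp [boolSign]

theorem abs_boolSign (b : Bool) : |boolSign b| = 1 := by
  cases b <;> simp [boolSign]

theorem Function.involutive_update_not {ι : Type*} [DecidableEq ι] (k : ι) :
    Function.Involutive fun σ : ι → Bool => Function.update σ k (!σ k) := by
  intro σ
  simp

section RademacherSum

variable {ι α : Type*} [Fintype ι] [DecidableEq ι] (T : Finset α) (hT : T.Nonempty)

/-- `2 ^ card ι` times the Rademacher average `E_σ sup_{t ∈ T} ∑ i, σ i * c i t`. -/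
def rademacherSum (c : ι → α → ℝ) : ℝ :=
  ∑ σ : ι → Bool, T.sup' hT fun t => ∑ i, boolSign (σ i) * c i t

theorem rademacherSum_const_mul {L : ℝ} (hL : 0 ≤ L) (c : ι → α → ℝ) :
    rademacherSum T hT (fun i t => L * c i t) = L * rademacherSum T hT c := by
  simp only [rademacherSum, mul_sum, mul₀_sup' hL, mul_left_comm L]

theorem rademacherSum_le_of_eq_of_ne {a b : ι → α → ℝ} (k : ι) (hab : ∀ i ≠ k, a i = b i)
    (hk : ∀ s t, |a k s - a k t| ≤ |b k s - b k t|) :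
    rademacherSum T hT a ≤ rademacherSum T hT b := by
  refine Fintype.sum_le_sum_of_add_comp_involutive (Function.involutive_update_not k) _ _
    fun σ => ?_
  set σ' := Function.update σ k (!σ k)
  set ε := boolSign (σ k)
  set f := fun t => ∑ i, boolSign (σ i) * a i t - ε * a k t
  -- `f` is the part of the sum off coordinate `k`, shared by `σ`, `σ'` and by `a`, `b`.
  have split : ∀ (τ : ι → Bool) (c : ι → α → ℝ), (∀ i ≠ k, τ i = σ i ∧ c i = a i) →
      (fun t => ∑ i, boolSign (τ i) * c i t) = fun t => f t + boolSign (τ k) * c k t := by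
    intro τ c hτc
    funext t
    rw [Fintype.sum_eq_sum_sub_add_of_eq_of_ne k fun i hi => by rw [(hτc i hi).1, (hτc i hi).2]]
  have hσ' : ∀ i ≠ k, σ' i = σ i := fun i hi => Function.update_of_ne hi _ _
  have hε' : boolSign (σ' k) = -ε := by simp [σ', ε, boolSign_not]
  simp only [split σ a fun i _ => ⟨rfl, rfl⟩, split σ' a fun i hi => ⟨hσ' i hi, rfl⟩,
    split σ b fun i hi => ⟨rfl, (hab i hi).symm⟩, split σ' b fun i hi => ⟨hσ' i hi, (hab i hi).symm⟩,
    hε', neg_mul, ← sub_eq_add_neg]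
  refine sup'_add_sup'_sub_le_of_sub_le_abs T hT f _ _ fun s _ t _ => ?_
  rw [← mul_sub, ← mul_sub, abs_mul, abs_boolSign, one_mul]
  refine (le_abs_self _).trans ?_
  rw [abs_mul, abs_boolSign, one_mul]
  exact hk s t

theorem rademacherSum_mono_of_abs_sub_le {g h : ι → α → ℝ}
    (hgh : ∀ i s t, |g i s - g i t| ≤ |h i s - h i t|) :
    rademacherSum T hT g ≤ rademacherSum T hT h := by
  let hybrid (K : Finset ι) (i : ι) : α → ℝ := if i ∈ K then h i else g i
  suffices ∀ K, rademacherSum T hT g ≤ rademacherSum T hT (hybrid K) by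
    simpa [hybrid] using this univ
  intro K
  induction K using Finset.induction_on with
  | empty => simp [hybrid]
  | insert k K hk ih =>
    refine ih.trans (rademacherSum_le_of_eq_of_ne T hT k (fun i hi => ?_) ?_)
    · simp [hybrid, hi]
    · simpa [hybrid, hk] using hgh k

end RademacherSum

theorem ledoux_talagrand_contraction_general (n : ℕ)
    (T : Finset (Fin n → ℝ)) (hT : T.Nonempty)
    (φ : ℝ → ℝ) (L : ℝ)
    (hφ : ∀ a b : ℝ, |φ a - φ b| ≤ L * |a - b|) :
    (∑ σ : Fin n → Bool,
        T.sup' hT (fun t => ∑ i, (if σ i then (1 : ℝ) else -1) * φ (t i))) / 2 ^ n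
      ≤ L * ((∑ σ : Fin n → Bool,
          T.sup' hT (fun t => ∑ i, (if σ i then (1 : ℝ) else -1) * t i)) / 2 ^ n) := by
  have hL : 0 ≤ L := by simpa using (abs_nonneg _).trans (hφ 1 0)
  have hcomp : rademacherSum T hT (fun i t => φ (t i))
      ≤ rademacherSum T hT (fun i t => L * t i) :=
    rademacherSum_mono_of_abs_sub_le T hT fun i s t => by
      rw [← mul_sub, abs_mul, abs_of_nonneg hL]
      exact hφ _ _
  rw [rademacherSum_const_mul T hT hL, rademacherSum, rademacherSum] at hcomp
  rw [mul_div_assoc']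
  exact div_le_div_of_nonneg_right hcomp (by positivity)

/-- Ledoux–Talagrand contraction: For a nonempty finite `T ⊆ ℝⁿ` and an
`L`-Lipschitz `φ : ℝ → ℝ` with `φ(0) = 0`,
`E_σ[ max_{t ∈ T} Σ_i σ_i·φ(t_i) ] ≤ L · E_σ[ max_{t ∈ T} Σ_i σ_i·t_i ]`,
where `σ` is uniform on `{−1,1}ⁿ` (encoded via `Fin n → Bool`). -/
theorem ledoux_talagrand_contraction (n : ℕ) (hn : 1 ≤ n)
    (T : Finset (Fin n → ℝ)) (hT : T.Nonempty)
    (φ : ℝ → ℝ) (L : ℝ) (hL : 0 ≤ L)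
    (hφ : ∀ a b : ℝ, |φ a - φ b| ≤ L * |a - b|) (hφ0 : φ 0 = 0) :
    (∑ σ : Fin n → Bool,
        T.sup' hT (fun t => ∑ i, (if σ i then (1 : ℝ) else -1) * φ (t i))) / 2 ^ n
      ≤ L * ((∑ σ : Fin n → Bool,
          T.sup' hT (fun t => ∑ i, (if σ i then (1 : ℝ) else -1) * t i)) / 2 ^ n) :=
  ledoux_talagrand_contraction_general n T hT φ L hφ
end
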